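/- arXiv:2505.18235 — 2 statements merged into one kernel-verified Lean document; each statement's English description precedes it below -/
import Mathlib

section
/- Under the local cosine-similarity hypothesis, chord length and metric distance agree to second order: with the hypotheses as above (⟨φ(z),φ(z')⟩ = g(d(z,z')²) for d(z,z') ≤ ε, g ∈ C², g'(0) < 0, |g''| ≤ C on [0,ε²]), for all z, z' with d(z,z') ≤ ε one has | ‖φ(z) − φ(z')‖₂ − √(−2g'(0)) · d(z,z') | ≤ C^{1/2} · d(z,z')². -/
/-!
Both the squared chord and the squared target are explicit: on the unit sphere
`‖φ z - φ z'‖² = 2 - 2 g(d²)` with `g 0 = 1`, while `(√(-2 g'(0)) d)² = -2 g'(0) d²`. Their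
difference is `-2` times the first-order Taylor remainder of `g` at `0`, hence at most `C d⁴`
in absolute value, and `|α - β| ≤ √|α² - β²|` for `α, β ≥ 0` takes the square root.
-/

open Set

lemma abs_sub_le_sqrt_abs_sq_sub_sq {a b : ℝ} (ha : 0 ≤ a) (hb : 0 ≤ b) :
    |a - b| ≤ √|a ^ 2 - b ^ 2| := by
  have hsq : |a - b| ^ 2 ≤ |a ^ 2 - b ^ 2| := by
    rw [show a ^ 2 - b ^ 2 = (a - b) * (a + b) by ring, abs_mul, abs_of_nonneg (add_nonneg ha hb),
      sq]
    gcongr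
    exact abs_sub_le_iff.mpr ⟨by linarith, by linarith⟩
  exact Real.le_sqrt_of_sq_le hsq

lemma abs_sub_sqrt_le_sqrt_abs_sq_sub {a : ℝ} (ha : 0 ≤ a) (x : ℝ) :
    |a - √x| ≤ √|a ^ 2 - x| := by
  rcases le_or_gt 0 x with hx | hx
  · simpa only [Real.sq_sqrt hx] using abs_sub_le_sqrt_abs_sq_sub_sq ha (Real.sqrt_nonneg x)
  · rw [Real.sqrt_eq_zero_of_nonpos hx.le, sub_zero, abs_of_nonneg ha]
    exact Real.le_sqrt_of_sq_le (le_abs.mpr (Or.inl (by linarith)))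

lemma abs_taylor_remainder_one_le {g : ℝ → ℝ} (hg : Differentiable ℝ g)
    (hg' : Differentiable ℝ (deriv g)) {a b C : ℝ} (hab : a ≤ b)
    (hC : ∀ t ∈ Icc a b, |deriv (deriv g) t| ≤ C) :
    |g b - g a - deriv g a * (b - a)| ≤ C / 2 * (b - a) ^ 2 := by
  refine image_norm_le_of_norm_deriv_right_le_deriv_boundary
    (f := fun x => g x - g a - deriv g a * (x - a)) (f' := fun x => deriv g x - deriv g a)
    (B := fun x => C / 2 * (x - a) ^ 2) (B' := fun x => C * (x - a))
    (by have := hg.continuous; fun_prop) (fun x _ => ?_) (by simp) (fun x => ?_)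
    (fun x hx => ?_) ⟨hab, le_rfl⟩
  · exact (((hg x).hasDerivAt.sub_const _).sub
      (((hasDerivAt_id x).sub_const a).const_mul _)).hasDerivWithinAt |>.congr_deriv (by simp)
  · exact ((((hasDerivAt_id' x).sub_const a).pow 2).const_mul (C / 2)).congr_deriv (by ring)
  · exact norm_image_sub_le_of_norm_deriv_le_segment'
      (fun t _ => (hg' t).hasDerivAt.hasDerivWithinAt)
      (fun t ht => hC t ⟨ht.1, ht.2.le.trans hx.2.le⟩) x ⟨hx.1, le_rfl⟩

lemma norm_sub_sq_eq_two_sub_two_inner {E : Type*} [NormedAddCommGroup E]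
    [InnerProductSpace ℝ E] {x y : E} (hx : ‖x‖ = 1) (hy : ‖y‖ = 1) :
    ‖x - y‖ ^ 2 = 2 - 2 * inner ℝ x y := by
  rw [norm_sub_sq_real, hx, hy]
  ring

theorem chord_local_second_order_agreement_general
    {Z : Type*} [MetricSpace Z] {D : ℕ}
    (φ : Z → EuclideanSpace ℝ (Fin D))
    (hsphere : ∀ z, ‖φ z‖ = 1)
    (g : ℝ → ℝ) (hg : ContDiff ℝ 2 g)
    (ε : ℝ)
    (hcos : ∀ z z' : Z, dist z z' ≤ ε →
      (inner ℝ (φ z) (φ z') : ℝ) = g (dist z z' ^ 2))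
    (C : ℝ) (hC : ∀ r ∈ Set.Icc 0 (ε ^ 2), |deriv (deriv g) r| ≤ C) :
    ∀ z z' : Z, dist z z' ≤ ε →
      |‖φ z - φ z'‖ - Real.sqrt (-2 * deriv g 0) * dist z z'| ≤
        Real.sqrt C * dist z z' ^ 2 := by
  intro z z' hd
  set d := dist z z'
  have hd0 : 0 ≤ d := dist_nonneg
  have hg0 : g 0 = 1 := by
    simpa [hsphere z] using (hcos z z (by simpa using hd0.trans hd)).symm
  have hchord : ‖φ z - φ z'‖ ^ 2 = 2 - 2 * g (d ^ 2) := by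
    rw [norm_sub_sq_eq_two_sub_two_inner (hsphere z) (hsphere z'), hcos z z' hd]
  have hC0 : 0 ≤ C := (abs_nonneg _).trans (hC 0 ⟨le_rfl, sq_nonneg ε⟩)
  have htaylor : |g (d ^ 2) - g 0 - deriv g 0 * d ^ 2| ≤ C / 2 * (d ^ 2) ^ 2 := by
    simpa using abs_taylor_remainder_one_le (hg.differentiable two_ne_zero)
      (hg.iterate_deriv' 1 1 |>.differentiable one_ne_zero) (sq_nonneg d)
      (fun t ht => hC t ⟨ht.1, ht.2.trans (pow_le_pow_left₀ hd0 hd 2)⟩)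
  have hsq_diff : |‖φ z - φ z'‖ ^ 2 - -2 * deriv g 0 * d ^ 2| ≤ C * (d ^ 2) ^ 2 :=
    calc |‖φ z - φ z'‖ ^ 2 - -2 * deriv g 0 * d ^ 2|
        = 2 * |g (d ^ 2) - g 0 - deriv g 0 * d ^ 2| := by
          rw [hchord, hg0, ← abs_two, ← abs_mul, ← abs_neg]
          ring_nf
      _ ≤ 2 * (C / 2 * (d ^ 2) ^ 2) := by gcongr
      _ = C * (d ^ 2) ^ 2 := by ring
  calc |‖φ z - φ z'‖ - √(-2 * deriv g 0) * d|
      = |‖φ z - φ z'‖ - √(-2 * deriv g 0 * d ^ 2)| := by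
        rw [Real.sqrt_mul' _ (sq_nonneg d), Real.sqrt_sq hd0]
    _ ≤ √|‖φ z - φ z'‖ ^ 2 - -2 * deriv g 0 * d ^ 2| :=
        abs_sub_sqrt_le_sqrt_abs_sq_sub (norm_nonneg _) _
    _ ≤ √(C * (d ^ 2) ^ 2) := Real.sqrt_le_sqrt hsq_diff
    _ = √C * d ^ 2 := by rw [Real.sqrt_mul hC0, Real.sqrt_sq (sq_nonneg d)]

theorem chord_local_second_order_agreement
    {Z : Type*} [MetricSpace Z] {D : ℕ}
    (φ : Z → EuclideanSpace ℝ (Fin D))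
    (hsphere : ∀ z, ‖φ z‖ = 1)
    (g : ℝ → ℝ) (hg : ContDiff ℝ 2 g) (hg' : deriv g 0 < 0)
    (ε : ℝ) (hε : 0 < ε)
    (hcos : ∀ z z' : Z, dist z z' ≤ ε →
      (inner ℝ (φ z) (φ z') : ℝ) = g (dist z z' ^ 2))
    (C : ℝ) (hC : ∀ r ∈ Set.Icc 0 (ε ^ 2), |deriv (deriv g) r| ≤ C) :
    ∀ z z' : Z, dist z z' ≤ ε →
      |‖φ z - φ z'‖ - Real.sqrt (-2 * deriv g 0) * dist z z'| ≤
        Real.sqrt C * dist z z' ^ 2 :=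
  chord_local_second_order_agreement_general φ hsphere g hg ε hcos C hC
end

section
/- Main isometry theorem: Let (Z, d) be a metric space, φ : Z → S^{D−1} continuous, and suppose there exist ε > 0 and a C² function g with g'(0) < 0 such that ⟨φ(z), φ(z')⟩ = g(d(z,z')²) whenever d(z,z') ≤ ε. Let η : [a,b] → Z be a path of finite length and γ = φ ∘ η the corresponding path on the sphere. Then L(γ) = √(−2g'(0)) · L(η), where L denotes path length (in (Z,d) for η, and in the Euclidean metric of ℝ^D for γ). -/
/-!
Locally, `φ` is almost a dilation by `c = √(-2 g'(0))`: on the unit sphere the chord length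
is `‖φ z - φ z'‖ = √(2 - 2 g(d²))` with `d = dist z z'`, and since `g 0 = 1` this equals
`c d + o(d)` as `d → 0`. Hence for every `C₁ < c < C₂` there is a scale `r > 0` below which
`C₁ d ≤ ‖φ z - φ z'‖ ≤ C₂ d`. As `η` is uniformly continuous on `[a, b]`, cutting `[a, b]`
into short enough pieces gives `C₁ L(η) ≤ L(φ ∘ η) ≤ C₂ L(η)`; let `C₁, C₂ → c`.
-/

open Set Filter Topology
open scoped ENNReal

section Variation

variable {E F : Type*} [PseudoEMetricSpace E] [PseudoEMetricSpace F]

lemma eVariationOn_le_mul_of_forall_edist_le {α : Type*} [LinearOrder α] {f : α → E}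
    {g : α → F} {s : Set α} {C : ℝ≥0∞}
    (h : ∀ x ∈ s, ∀ y ∈ s, edist (f x) (f y) ≤ C * edist (g x) (g y)) :
    eVariationOn f s ≤ C * eVariationOn g s := by
  refine iSup_le fun ⟨n, u, hu, us⟩ => ?_
  calc ∑ i ∈ Finset.range n, edist (f (u (i + 1))) (f (u i))
      ≤ ∑ i ∈ Finset.range n, C * edist (g (u (i + 1))) (g (u i)) :=
        Finset.sum_le_sum fun i _ => h _ (us _) _ (us _)
    _ = C * ∑ i ∈ Finset.range n, edist (g (u (i + 1))) (g (u i)) := (Finset.mul_sum ..).symm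
    _ ≤ C * eVariationOn g s := by gcongr; exact eVariationOn.sum_le hu us

lemma eVariationOn_Icc_add_Icc (f : ℝ → E) {a m b : ℝ} (ham : a ≤ m) (hmb : m ≤ b) :
    eVariationOn f (Icc a m) + eVariationOn f (Icc m b) = eVariationOn f (Icc a b) := by
  simpa using eVariationOn.Icc_add_Icc f ham hmb (mem_univ m)

lemma eVariationOn_Icc_le_mul_of_forall_dist_le {f : ℝ → E} {g : ℝ → F} {C : ℝ≥0∞}
    {δ : ℝ} (hδ : 0 < δ) {a b : ℝ}
    (h : ∀ x ∈ Icc a b, ∀ y ∈ Icc a b, dist x y ≤ δ →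
      edist (f x) (f y) ≤ C * edist (g x) (g y)) :
    eVariationOn f (Icc a b) ≤ C * eVariationOn g (Icc a b) := by
  obtain ⟨n, hn⟩ := exists_nat_ge ((b - a) / δ)
  rw [div_le_iff₀ hδ] at hn
  induction n generalizing a with
  | zero =>
    rw [eVariationOn.subsingleton f (subsingleton_Icc_of_ge (by simpa using hn))]
    exact zero_le
  | succ n ih =>
    by_cases hb : b ≤ a + δ
    · exact eVariationOn_le_mul_of_forall_edist_le fun x hx y hy =>
        h x hx y hy ((Real.dist_le_of_mem_Icc hx hy).trans (by linarith))
    · push Not at hb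
      have ham : a ≤ a + δ := by linarith
      rw [← eVariationOn_Icc_add_Icc f ham hb.le, ← eVariationOn_Icc_add_Icc g ham hb.le,
        mul_add]
      gcongr
      · exact eVariationOn_le_mul_of_forall_edist_le fun x hx y hy =>
          h x ⟨hx.1, hx.2.trans hb.le⟩ y ⟨hy.1, hy.2.trans hb.le⟩
            ((Real.dist_le_of_mem_Icc hx hy).trans (by linarith))
      · exact ih (fun x hx y hy => h x ⟨ham.trans hx.1, hx.2⟩ y ⟨ham.trans hy.1, hy.2⟩)
          (by push_cast at hn; linarith)

lemma eVariationOn_Icc_le_mul_of_forall_dist_lt {Z : Type*} [PseudoMetricSpace Z]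
    {η : ℝ → Z} {a b : ℝ} (hη : ContinuousOn η (Icc a b)) {f : ℝ → E} {g : ℝ → F}
    {C : ℝ≥0∞} {r : ℝ} (hr : 0 < r)
    (h : ∀ x ∈ Icc a b, ∀ y ∈ Icc a b, dist (η x) (η y) < r →
      edist (f x) (f y) ≤ C * edist (g x) (g y)) :
    eVariationOn f (Icc a b) ≤ C * eVariationOn g (Icc a b) := by
  obtain ⟨δ, hδ, hηδ⟩ := Metric.uniformContinuousOn_iff.1
    (isCompact_Icc.uniformContinuousOn_of_continuous hη) r hr
  exact eVariationOn_Icc_le_mul_of_forall_dist_le (half_pos hδ) fun x hx y hy hxy =>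
    h x hx y hy (hηδ x hx y hy (by linarith))

end Variation

section LocalDilation

variable {Z W : Type*} [MetricSpace Z] [PseudoMetricSpace W] {ψ : Z → W} {ρ : ℝ → ℝ}
  {ε c : ℝ}

lemma exists_forall_dist_lt_of_eventually (hε : 0 < ε)
    (hψ : ∀ z z', dist z z' ≤ ε → dist (ψ z) (ψ z') = ρ (dist z z'))
    {P : ℝ → ℝ → Prop} (h0 : P 0 0) (hP : ∀ᶠ t in 𝓝[>] 0, P t (ρ t)) :
    ∃ r > 0, ∀ z z', dist z z' < r → P (dist z z') (dist (ψ z) (ψ z')) := by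
  obtain ⟨r, hr, hPr⟩ := (nhdsGT_basis 0).eventually_iff.1 hP
  refine ⟨min r ε, lt_min hr hε, fun z z' hzz' => ?_⟩
  rcases eq_or_ne z z' with rfl | hne
  · simpa using h0
  · rw [hψ z z' (hzz'.le.trans (min_le_right _ _))]
    exact hPr ⟨dist_pos.2 hne, hzz'.trans_le (min_le_left _ _)⟩

lemma exists_edist_le_mul_of_tendsto (hε : 0 < ε)
    (hψ : ∀ z z', dist z z' ≤ ε → dist (ψ z) (ψ z') = ρ (dist z z'))
    (hρ : Tendsto (fun t => ρ t / t) (𝓝[>] 0) (𝓝 c)) {C : ℝ} (hC : c < C) :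
    ∃ r > 0, ∀ z z', dist z z' < r → edist (ψ z) (ψ z') ≤ ENNReal.ofReal C * edist z z' := by
  have hP : ∀ᶠ t in 𝓝[>] 0, ρ t ≤ C * t := by
    filter_upwards [hρ.eventually (gt_mem_nhds hC), self_mem_nhdsWithin]
      with t ht (ht0 : 0 < t)
    exact ((div_lt_iff₀ ht0).1 ht).le
  obtain ⟨r, hr, hψr⟩ :=
    exists_forall_dist_lt_of_eventually (P := fun t s => s ≤ C * t) hε hψ (by simp) hP
  refine ⟨r, hr, fun z z' hzz' => ?_⟩
  rw [edist_dist, edist_dist, ← ENNReal.ofReal_mul' dist_nonneg]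
  exact ENNReal.ofReal_le_ofReal (hψr z z' hzz')

lemma exists_mul_edist_le_of_tendsto (hε : 0 < ε)
    (hψ : ∀ z z', dist z z' ≤ ε → dist (ψ z) (ψ z') = ρ (dist z z'))
    (hρ : Tendsto (fun t => ρ t / t) (𝓝[>] 0) (𝓝 c)) {C : ℝ} (hC : C < c) :
    ∃ r > 0, ∀ z z', dist z z' < r → ENNReal.ofReal C * edist z z' ≤ edist (ψ z) (ψ z') := by
  have hP : ∀ᶠ t in 𝓝[>] 0, C * t ≤ ρ t := by
    filter_upwards [hρ.eventually (lt_mem_nhds hC), self_mem_nhdsWithin]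
      with t ht (ht0 : 0 < t)
    exact ((lt_div_iff₀ ht0).1 ht).le
  obtain ⟨r, hr, hψr⟩ :=
    exists_forall_dist_lt_of_eventually (P := fun t s => C * t ≤ s) hε hψ (by simp) hP
  refine ⟨r, hr, fun z z' hzz' => ?_⟩
  rw [edist_dist, edist_dist, ← ENNReal.ofReal_mul' dist_nonneg]
  exact ENNReal.ofReal_le_ofReal (hψr z z' hzz')

end LocalDilation

lemma dist_eq_sqrt_two_sub_two_mul_inner {V : Type*} [NormedAddCommGroup V]
    [InnerProductSpace ℝ V] {u v : V} (hu : ‖u‖ = 1) (hv : ‖v‖ = 1) :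
    dist u v = √(2 - 2 * inner ℝ u v) := by
  rw [← Real.sqrt_sq dist_nonneg, dist_eq_norm, norm_sub_sq_real, hu, hv]
  ring_nf

lemma tendsto_sqrt_two_sub_two_mul_comp_sq_div {g : ℝ → ℝ} (hg : DifferentiableAt ℝ g 0)
    (hg0 : g 0 = 1) :
    Tendsto (fun t => √(2 - 2 * g (t ^ 2)) / t) (𝓝[>] 0) (𝓝 √(-2 * deriv g 0)) := by
  have hsq : Tendsto (fun t : ℝ => t ^ 2) (𝓝[>] 0) (𝓝[≠] 0) := by
    refine tendsto_nhdsWithin_of_tendsto_nhds_of_eventually_within _ ?_ ?_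
    · exact ((continuous_pow 2).tendsto' 0 0 (by simp)).mono_left nhdsWithin_le_nhds
    · filter_upwards [self_mem_nhdsWithin] with t (ht : 0 < t)
      exact pow_ne_zero 2 ht.ne'
  have hslope := (hasDerivAt_iff_tendsto_slope.1 hg.hasDerivAt).comp hsq
  refine ((hslope.const_mul (-2)).sqrt).congr' ?_
  filter_upwards [self_mem_nhdsWithin] with t (ht : 0 < t)
  have hdiv : √(2 - 2 * g (t ^ 2)) / t = √((2 - 2 * g (t ^ 2)) / t ^ 2) := by
    rw [Real.sqrt_div' _ (sq_nonneg t), Real.sqrt_sq ht.le]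
  rw [hdiv, Function.comp_apply, slope_def_field, hg0, sub_zero]
  congr 1
  field_simp
  ring

lemma eq_ofReal_mul_of_forall_lt_of_forall_gt {x y : ℝ≥0∞} {c : ℝ} (hc : 0 < c)
    (hupper : ∀ C, c < C → y ≤ ENNReal.ofReal C * x)
    (hlower : ∀ C, 0 < C → C < c → ENNReal.ofReal C * x ≤ y) :
    y = ENNReal.ofReal c * x := by
  have hlim : Tendsto (fun C => ENNReal.ofReal C * x) (𝓝 c) (𝓝 (ENNReal.ofReal c * x)) :=
    ENNReal.Tendsto.mul_const (ENNReal.continuous_ofReal.tendsto c)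
      (Or.inl (ENNReal.ofReal_pos.2 hc).ne')
  refine le_antisymm (ge_of_tendsto (hlim.mono_left nhdsWithin_le_nhds : Tendsto _ (𝓝[>] c) _)
    (eventually_nhdsWithin_of_forall fun C hC => hupper C hC)) ?_
  exact le_of_tendsto (hlim.mono_left nhdsWithin_le_nhds : Tendsto _ (𝓝[<] c) _)
    (eventually_of_mem (Ioo_mem_nhdsLT hc) fun C hC => hlower C hC.1 hC.2)

theorem representation_manifold_isometry_general
    {Z : Type*} [MetricSpace Z] {D : ℕ}
    (φ : Z → EuclideanSpace ℝ (Fin D))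
    (hsphere : ∀ z, ‖φ z‖ = 1)
    (g : ℝ → ℝ) (hg : ContDiff ℝ 2 g) (hg' : deriv g 0 < 0)
    (ε : ℝ) (hε : 0 < ε)
    (hcos : ∀ z z' : Z, dist z z' ≤ ε →
      (inner ℝ (φ z) (φ z') : ℝ) = g (dist z z' ^ 2))
    {a b : ℝ} (η : ℝ → Z)
    (hη : ContinuousOn η (Set.Icc a b)) :
    eVariationOn (φ ∘ η) (Set.Icc a b) =
      ENNReal.ofReal (Real.sqrt (-2 * deriv g 0)) * eVariationOn η (Set.Icc a b) := by
  have hg0 : g 0 = 1 := by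
    simpa [real_inner_self_eq_norm_sq, hsphere] using
      (hcos (η a) (η a) (by simpa using hε.le)).symm
  have hchord : ∀ z z', dist z z' ≤ ε → dist (φ z) (φ z') = √(2 - 2 * g (dist z z' ^ 2)) :=
    fun z z' h => by
      rw [dist_eq_sqrt_two_sub_two_mul_inner (hsphere z) (hsphere z'), hcos z z' h]
  have hlim := tendsto_sqrt_two_sub_two_mul_comp_sq_div (hg.differentiable (by norm_num) 0) hg0
  refine eq_ofReal_mul_of_forall_lt_of_forall_gt (Real.sqrt_pos.2 (by linarith))
    (fun C hC => ?_) (fun C hC0 hC => ?_)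
  · obtain ⟨r, hr, hlip⟩ := exists_edist_le_mul_of_tendsto hε hchord hlim hC
    exact eVariationOn_Icc_le_mul_of_forall_dist_lt hη hr fun x _ y _ hxy => hlip _ _ hxy
  · obtain ⟨r, hr, hcolip⟩ := exists_mul_edist_le_of_tendsto hε hchord hlim hC
    have hC' : ENNReal.ofReal C ≠ 0 := (ENNReal.ofReal_pos.2 hC0).ne'
    rw [ENNReal.mul_le_iff_le_inv hC' ENNReal.ofReal_ne_top]
    exact eVariationOn_Icc_le_mul_of_forall_dist_lt hη hr fun x _ y _ hxy =>
      (ENNReal.mul_le_iff_le_inv hC' ENNReal.ofReal_ne_top).1 (hcolip _ _ hxy)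

theorem representation_manifold_isometry
    {Z : Type*} [MetricSpace Z] {D : ℕ}
    (φ : Z → EuclideanSpace ℝ (Fin D))
    (hφcont : Continuous φ)
    (hsphere : ∀ z, ‖φ z‖ = 1)
    (g : ℝ → ℝ) (hg : ContDiff ℝ 2 g) (hg' : deriv g 0 < 0)
    (ε : ℝ) (hε : 0 < ε)
    (hcos : ∀ z z' : Z, dist z z' ≤ ε →
      (inner ℝ (φ z) (φ z') : ℝ) = g (dist z z' ^ 2))
    {a b : ℝ} (hab : a ≤ b) (η : ℝ → Z)
    (hη : ContinuousOn η (Set.Icc a b))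
    (hfin : eVariationOn η (Set.Icc a b) ≠ ⊤) :
    eVariationOn (φ ∘ η) (Set.Icc a b) =
      ENNReal.ofReal (Real.sqrt (-2 * deriv g 0)) * eVariationOn η (Set.Icc a b) :=
  representation_manifold_isometry_general φ hsphere g hg hg' ε hε hcos η hη
end
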